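/- arXiv:2003.06204 — 6 statements merged into one kernel-verified Lean document; each statement's English description precedes it below -/
import Mathlib

section
/- Let G be a finite simple graph containing a cycle x_1 x_2 ⋯ x_m x_1 with m ≥ 4 such that the vertex set {x_1, …, x_m} does not induce a clique in G. If G is given a semi-transitive orientation and m − 2 of the edges x_i x_{i+1} (indices taken modulo m, so x_{m+1} = x_1) are oriented from x_i to x_{i+1}, then each of the remaining two edges of the cycle is oriented in the opposite direction, i.e., from x_{i+1} to x_i. -/
/-- `D` is an orientation of the simple graph `G`: every edge gets exactly one direction. -/
def SimpleGraph.IsOrientation {V : Type*} (G : SimpleGraph V) (D : V → V → Prop) : Prop :=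
  (∀ u v, G.Adj u v ↔ D u v ∨ D v u) ∧ ∀ u v, D u v → ¬ D v u

/-- A digraph (given as a relation) is acyclic: no directed cycle. -/
def DigraphAcyclic {V : Type*} (D : V → V → Prop) : Prop :=
  ∀ v, ¬ Relation.TransGen D v v

/-- `D` is a semi-transitive orientation of `G`: it is an acyclic orientation such that for every
directed path `p 0 → p 1 → ⋯ → p k`, either `p 0` and `p k` are non-adjacent in `G`, or
`p i → p j` is an arc for all `i < j`. -/
def SimpleGraph.IsSemitransitiveOrientation {V : Type*} (G : SimpleGraph V)
    (D : V → V → Prop) : Prop :=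
  G.IsOrientation D ∧ DigraphAcyclic D ∧
    ∀ (k : ℕ) (p : Fin (k + 1) → V),
      (∀ i : Fin k, D (p i.castSucc) (p i.succ)) →
      (¬ G.Adj (p 0) (p (Fin.last k)) ∨ ∀ i j : Fin (k + 1), i < j → D (p i) (p j))

/-- A graph is semi-transitive if it admits a semi-transitive orientation. -/
def SimpleGraph.Semitransitive {V : Type*} (G : SimpleGraph V) : Prop :=
  ∃ D : V → V → Prop, G.IsSemitransitiveOrientation D

/-- Lemma 2 of the paper: if a semi-transitively oriented graph `G` contains a cycle
`x 0, x 1, …, x (m-1), x 0` with `m ≥ 4` whose vertex set does not induce a clique, and `m - 2`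
of the edges `x i — x (i+1)` (indices mod `m`) are oriented from `x i` to `x (i+1)`, then each of
the remaining two edges of the cycle is oriented in the opposite direction. -/
theorem semitransitive_cycle_lemma {V : Type*} [Fintype V] (G : SimpleGraph V)
    (D : V → V → Prop) (hD : G.IsSemitransitiveOrientation D)
    (m : ℕ) (hm : 4 ≤ m) (x : ℕ → V)
    (hinj : ∀ i < m, ∀ j < m, x i = x j → i = j)
    (hcyc : ∀ i < m, G.Adj (x i) (x ((i + 1) % m)))
    (hnotclique : ∃ i < m, ∃ j < m, i ≠ j ∧ ¬ G.Adj (x i) (x j))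
    (S : Finset ℕ) (hSm : S ⊆ Finset.range m) (hcard : S.card = m - 2)
    (hdir : ∀ i ∈ S, D (x i) (x ((i + 1) % m))) :
    ∀ i < m, i ∉ S → D (x ((i + 1) % m)) (x i) := by
  obtain ⟨⟨hadj, hanti⟩, hacyc, hsemi⟩ := hD
  intro i hi hiS
  by_contra hback
  have hm0 : 0 < m := by omega
  have hDi : D (x i) (x ((i + 1) % m)) := by
    have := (hadj _ _).mp (hcyc i hi)
    tauto
  set T := Finset.range m \ S with hT
  have hTcard : T.card = 2 := by
    rw [hT, Finset.card_sdiff_of_subset hSm, hcard, Finset.card_range]; omega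
  have hiT : i ∈ T := by
    simp [hT, Finset.mem_sdiff, Finset.mem_range, hi, hiS]
  obtain ⟨a, b, hab, hTeq⟩ := Finset.card_eq_two.mp hTcard
  have hmem : ∀ j, j ∈ T ↔ (j = a ∨ j = b) := by
    intro j; rw [hTeq]; simp
  obtain ⟨c, hci, hcT⟩ : ∃ c, c ≠ i ∧ c ∈ T := by
    rcases (hmem i).mp hiT with h | h
    · exact ⟨b, by omega, (hmem b).mpr (Or.inr rfl)⟩
    · exact ⟨a, by omega, (hmem a).mpr (Or.inl rfl)⟩
  have hc : c < m := by
    have := (Finset.mem_sdiff.mp hcT).1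
    simpa using this
  have hforward' : ∀ j, j < m → j ≠ c → D (x j) (x ((j + 1) % m)) := by
    intro j hj hjc
    by_cases hjS : j ∈ S
    · exact hdir j hjS
    · have hjT : j ∈ T := by
        simp [hT, Finset.mem_sdiff, Finset.mem_range, hj, hjS]
      have hji : j = i := by
        have h1 := (hmem j).mp hjT
        have h2 := (hmem i).mp hiT
        have h3 := (hmem c).mp hcT
        omega
      subst hji
      exact hDi
  by_cases hcb : D (x ((c + 1) % m)) (x c)
  · -- the long directed path around the cycle forces a clique
    set p : Fin (m - 1 + 1) → V := fun j => x ((c + 1 + j.val) % m) with hp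
    have hpath : ∀ jf : Fin (m - 1), D (p jf.castSucc) (p jf.succ) := by
      intro jf
      have hj : jf.val < m - 1 := jf.isLt
      have hlt : (c + 1 + jf.val) % m < m := Nat.mod_lt _ hm0
      have hne : (c + 1 + jf.val) % m ≠ c := by
        intro h
        have h1 : c % m = (c + 1 + jf.val) % m := by
          rw [h, Nat.mod_eq_of_lt hc]
        have hdvd : m ∣ (c + 1 + jf.val) - c :=
          (Nat.modEq_iff_dvd' (by omega)).mp h1
        have := Nat.le_of_dvd (by omega) hdvd
        omega
      have harc := hforward' _ hlt hne
      have heq : ((c + 1 + jf.val) % m + 1) % m = (c + 1 + (jf.val + 1)) % m := by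
        rw [Nat.mod_add_mod, Nat.add_assoc]
      show D (x ((c + 1 + (jf.castSucc).val) % m)) (x ((c + 1 + (jf.succ).val) % m))
      rw [Fin.coe_castSucc, Fin.val_succ, ← heq]
      exact harc
    have hp0 : p 0 = x ((c + 1) % m) := by simp [hp]
    have hplastval : (c + 1 + (m - 1)) % m = c := by
      have h1 : c + 1 + (m - 1) = c + m := by omega
      rw [h1, Nat.add_mod_right, Nat.mod_eq_of_lt hc]
    have hplast : p (Fin.last (m - 1)) = x c := by
      show x ((c + 1 + (Fin.last (m - 1)).val) % m) = x c
      rw [Fin.val_last, hplastval]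
    have hadjlast : G.Adj (p 0) (p (Fin.last (m - 1))) := by
      rw [hp0, hplast]; exact (hcyc c hc).symm
    rcases hsemi (m - 1) p hpath with h | hall
    · exact h hadjlast
    · obtain ⟨u, hu, v, hv, huv, hnadj⟩ := hnotclique
      have pos : ∀ w, w < m → ∃ jw : Fin (m - 1 + 1), p jw = x w := by
        intro w hw
        refine ⟨⟨(w + m - (c + 1)) % m, by
          have := Nat.mod_lt (w + m - (c + 1)) hm0; omega⟩, ?_⟩
        show x ((c + 1 + ((w + m - (c + 1)) % m)) % m) = x w
        congr 1
        have h1 : (c + 1 + ((w + m - (c + 1)) % m)) % m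
            = (c + 1 + (w + m - (c + 1))) % m := Nat.add_mod_mod _ _ _
        have h2 : c + 1 + (w + m - (c + 1)) = w + m := by omega
        rw [h1, h2, Nat.add_mod_right, Nat.mod_eq_of_lt hw]
      obtain ⟨ju, hju⟩ := pos u hu
      obtain ⟨jv, hjv⟩ := pos v hv
      have hxne : x u ≠ x v := fun h => huv (hinj u hu v hv h)
      have hjne : ju ≠ jv := by
        intro h; apply hxne; rw [← hju, ← hjv, h]
      rcases lt_or_gt_of_ne hjne with h | h
      · have := hall ju jv h
        rw [hju, hjv] at this
        exact hnadj ((hadj (x u) (x v)).mpr (Or.inl this))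
      · have := hall jv ju h
        rw [hju, hjv] at this
        exact hnadj ((hadj (x u) (x v)).mpr (Or.inr this))
  · -- all edges forward: directed cycle, contradiction with acyclicity
    have hfa : ∀ j, j < m → D (x j) (x ((j + 1) % m)) := by
      intro j hj
      by_cases hjc : j = c
      · subst hjc
        have := (hadj _ _).mp (hcyc j hj)
        tauto
      · exact hforward' j hj hjc
    have hchain : ∀ k : ℕ, Relation.TransGen D (x 0) (x ((k + 1) % m)) := by
      intro k
      induction k with
      | zero => exact Relation.TransGen.single (hfa 0 hm0)
      | succ k ih =>
          have harc := hfa ((k + 1) % m) (Nat.mod_lt _ hm0)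
          have heq : ((k + 1) % m + 1) % m = (k + 1 + 1) % m :=
            Nat.mod_add_mod (k + 1) m 1
          rw [heq] at harc
          exact ih.tail harc
    have hcyc0 := hchain (m - 1)
    have h1 : (m - 1 + 1) = m := by omega
    rw [h1, Nat.mod_self] at hcyc0
    exact hacyc (x 0) hcyc0
end

section
/- For every integer n ≥ 6, the circulant graph C(n; 1, 2) is semi-transitive. -/
/-- The circulant graph `C(n; S)`: vertex set `ZMod n`, with distinct vertices `i, j` adjacent
iff `i - j ≡ s (mod n)` or `j - i ≡ s (mod n)` for some `s ∈ S`. -/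
def circulant (n : ℕ) (S : Set ℤ) : SimpleGraph (ZMod n) :=
  SimpleGraph.fromRel (fun i j => ∃ s ∈ S, i - j = (s : ZMod n))

/-!
Order the vertices as `0, 1, n-2, n-1, 2, 3, …, n-3` and orient every edge of `C(n; 1, 2)`
towards its later endpoint. This orientation is acyclic, so semi-transitivity can only fail
along a directed path of at least three arcs between adjacent vertices. But after two arcs a
directed path is either at `n-1`, whose only continuation is `n-3`, or inside `2, …, n-3`, where
it only moves forward along the cycle; for `n ≥ 6` its end is then never adjacent to its start.
-/

open Relation

section Orientation

variable {V : Type*} {G : SimpleGraph V} {D : V → V → Prop}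

theorem transGen_of_path {k : ℕ} (p : Fin (k + 1) → V)
    (hp : ∀ i : Fin k, D (p i.castSucc) (p i.succ)) {i j : Fin (k + 1)} (hij : i < j) :
    TransGen D (p i) (p j) := by
  induction j using Fin.induction with
  | zero => exact absurd hij (Fin.not_lt_zero i)
  | succ j ih =>
    rcases (Fin.le_castSucc_iff.mpr hij).lt_or_eq with hlt | rfl
    · exact (ih hlt).tail (hp j)
    · exact .single (hp j)

theorem SimpleGraph.IsOrientation.arc_of_transGen (hD : G.IsOrientation D)
    (hacyc : DigraphAcyclic D) {u w : V} (hreach : TransGen D u w) (hadj : G.Adj u w) : D u w :=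
  ((hD.1 u w).1 hadj).resolve_right fun hwu => hacyc u (hreach.tail hwu)

/-- On paths with at most two arcs the only possible shortcut is forced forward by acyclicity. -/
theorem SimpleGraph.IsOrientation.isSemitransitiveOrientation (hD : G.IsOrientation D)
    (hacyc : DigraphAcyclic D)
    (hlong : ∀ u a b w, D u a → D a b → TransGen D b w → ¬ G.Adj u w) :
    G.IsSemitransitiveOrientation D := by
  refine ⟨hD, hacyc, fun k p hp => ?_⟩
  by_cases hk : 3 ≤ k
  · left
    exact hlong _ _ _ _ (hp ⟨0, by omega⟩) (hp ⟨1, by omega⟩)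
      (transGen_of_path p hp (i := ⟨2, by omega⟩) (Fin.mk_lt_mk.mpr (by omega)))
  · by_cases hadj : G.Adj (p 0) (p (Fin.last k))
    · right
      intro i j hij
      have hij' : (i : ℕ) < j := hij
      by_cases hji : (j : ℕ) = i + 1
      · convert hp ⟨i, by omega⟩ using 2 <;> ext <;> simp [hji]
      · obtain rfl : i = 0 := Fin.ext (by rw [Fin.val_zero]; omega)
        obtain rfl : j = Fin.last k := Fin.ext (by simp; omega)
        exact hD.arc_of_transGen hacyc (transGen_of_path p hp hij) hadj
    · exact .inl hadj

end Orientation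

section OrientBy

variable {V α : Type*} [LinearOrder α] (G : SimpleGraph V) (f : V → α)

def SimpleGraph.orientBy (u v : V) : Prop :=
  G.Adj u v ∧ f u < f v

variable {G f}

theorem SimpleGraph.isOrientation_orientBy (hf : Function.Injective f) :
    G.IsOrientation (G.orientBy f) := by
  refine ⟨fun u v => ⟨fun h => ?_, ?_⟩, fun u v huv hvu => huv.2.asymm hvu.2⟩
  · rcases lt_or_gt_of_ne (hf.ne h.ne) with hlt | hlt
    exacts [.inl ⟨h, hlt⟩, .inr ⟨h.symm, hlt⟩]
  · rintro (h | h)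
    exacts [h.1, h.1.symm]

theorem SimpleGraph.digraphAcyclic_orientBy : DigraphAcyclic (G.orientBy f) := by
  intro v hv
  have hlt : TransGen (· < ·) (f v) (f v) := hv.lift f fun _ _ h => h.2
  exact lt_irrefl _ (transGen_eq_self (r := (· < · : α → α → Prop)) ▸ hlt)

end OrientBy

theorem ZMod.val_add_natCast_eq_or {n : ℕ} [NeZero n] (z : ZMod n) {d : ℕ} (hd : d < n) :
    (z + d).val = z.val + d ∨ (z + d).val + n = z.val + d := by
  rcases lt_or_ge (z.val + (d : ZMod n).val) n with h | h
  · left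
    rw [ZMod.val_add_of_lt h, ZMod.val_cast_of_lt hd]
  · right
    rw [← ZMod.val_add_val_of_le h, ZMod.val_cast_of_lt hd]

namespace CirculantOneTwo

/-- The position of the vertex `a` in the order `0, 1, n-2, n-1, 2, 3, …, n-3`. -/
def rank (n a : ℕ) : ℕ :=
  if a = 0 then 0 else if a = 1 then 1 else if a = n - 2 then 2 else if a = n - 1 then 3
  else a + 2

/-- For `a, b < n`: `b` is one or two steps after `a` on the cycle `0 → 1 → ⋯ → n-1 → 0`. -/
def Ahead (n a b : ℕ) : Prop :=
  b = a + 1 ∨ b = a + 2 ∨ b + n = a + 1 ∨ b + n = a + 2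

/-- The arcs of `orientation n` below, read on the representatives `0, …, n-1`. -/
def Arc (n a b : ℕ) : Prop :=
  a < n ∧ b < n ∧ (Ahead n a b ∨ Ahead n b a) ∧ rank n a < rank n b

variable {n : ℕ}

theorem rank_injective : Function.Injective (rank n) := by
  intro a b h
  unfold rank at h
  split_ifs at h <;> omega

theorem arc_cases (hn : 6 ≤ n) {a b : ℕ} (h : Arc n a b) :
    (a = 0 ∧ (b = 1 ∨ b = 2 ∨ b = n - 2 ∨ b = n - 1)) ∨
    (a = 1 ∧ (b = 2 ∨ b = 3 ∨ b = n - 1)) ∨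
    (a = n - 2 ∧ (b = n - 4 ∨ b = n - 3 ∨ b = n - 1)) ∨
    (a = n - 1 ∧ b = n - 3) ∨
    (2 ≤ a ∧ (b = a + 1 ∨ b = a + 2) ∧ b ≤ n - 3) := by
  obtain ⟨ha, hb, hab, hr⟩ := h
  unfold Ahead at hab
  unfold rank at hr
  split_ifs at hr <;> omega

theorem transGen_arc_cases (hn : 6 ≤ n) {b w : ℕ} (h : TransGen (Arc n) b w)
    (hb : b = n - 1 ∨ 2 ≤ b ∧ b ≤ n - 3) :
    (b = n - 1 ∧ w = n - 3) ∨ (2 ≤ b ∧ b < w ∧ w ≤ n - 3) := by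
  induction h with
  | single h => have := arc_cases hn h; omega
  | tail _ h ih => have := arc_cases hn h; omega

theorem not_ahead_of_arc_arc_transGen (hn : 6 ≤ n) {u a b w : ℕ} (hua : Arc n u a)
    (hab : Arc n a b) (hbw : TransGen (Arc n) b w) : ¬ (Ahead n u w ∨ Ahead n w u) := by
  have hua' := arc_cases hn hua
  have hab' := arc_cases hn hab
  have hbw' := transGen_arc_cases hn hbw (by omega)
  unfold Ahead
  omega

theorem ahead_val_of_adj (hn : 3 ≤ n) {u v : ZMod n} (h : (circulant n {1, 2}).Adj u v) :
    Ahead n u.val v.val ∨ Ahead n v.val u.val := by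
  have : NeZero n := ⟨by omega⟩
  have key : ∀ x y : ZMod n, ∀ s ∈ ({1, 2} : Set ℤ), x - y = s → Ahead n y.val x.val := by
    rintro x y s hs hxy
    obtain ⟨d, rfl, hd⟩ : ∃ d : ℕ, s = d ∧ (d = 1 ∨ d = 2) := by
      rcases hs with rfl | rfl
      exacts [⟨1, rfl, .inl rfl⟩, ⟨2, rfl, .inr rfl⟩]
    rw [Int.cast_natCast, sub_eq_iff_eq_add'] at hxy
    subst hxy
    have := y.val_add_natCast_eq_or (d := d) (by omega)
    unfold Ahead
    omega
  rw [circulant, SimpleGraph.fromRel_adj] at h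
  rcases h.2 with ⟨s, hs, h⟩ | ⟨s, hs, h⟩
  exacts [.inr (key _ _ s hs h), .inl (key _ _ s hs h)]

abbrev orientation (n : ℕ) : ZMod n → ZMod n → Prop :=
  (circulant n {1, 2}).orientBy fun u => rank n u.val

theorem arc_val_of_orientation (hn : 3 ≤ n) {u v : ZMod n} (h : orientation n u v) :
    Arc n u.val v.val :=
  have : NeZero n := ⟨by omega⟩
  ⟨u.val_lt, v.val_lt, ahead_val_of_adj hn h.1, h.2⟩

theorem not_adj_of_orientation_path (hn : 6 ≤ n) {u a b w : ZMod n}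
    (hua : orientation n u a) (hab : orientation n a b) (hbw : TransGen (orientation n) b w) :
    ¬ (circulant n {1, 2}).Adj u w := fun huw =>
  not_ahead_of_arc_arc_transGen hn (arc_val_of_orientation (by omega) hua)
    (arc_val_of_orientation (by omega) hab)
    (hbw.lift ZMod.val fun _ _ => arc_val_of_orientation (by omega))
    (ahead_val_of_adj (by omega) huw)

end CirculantOneTwo

open CirculantOneTwo in
/-- For every `n ≥ 6`, the circulant graph `C(n; 1, 2)` is semi-transitive. -/
theorem circulant_one_two_semitransitive (n : ℕ) (hn : 6 ≤ n) :
    (circulant n {1, 2}).Semitransitive := by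
  have : NeZero n := ⟨by omega⟩
  have hrank : Function.Injective fun u : ZMod n => rank n u.val :=
    rank_injective.comp (ZMod.val_injective n)
  exact ⟨orientation n, (SimpleGraph.isOrientation_orientBy hrank).isSemitransitiveOrientation
    SimpleGraph.digraphAcyclic_orientBy fun _ _ _ _ => not_adj_of_orientation_path hn⟩
end

section
/- For every odd integer n > 3, Toft's graph T_n is semi-transitive. -/
/-- Toft's graph `T n` for odd `n > 3`: the vertex set is `Fin 4 × ZMod n`, where for
`i : Fin 4` the set `A (i+1)` consists of the vertices with first coordinate `i`.
The first and last classes induce `n`-cycles, the two middle classes induce a complete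
bipartite graph `K (n, n)`, and there are perfect matchings joining the first class to the
second and the third class to the fourth. -/
def toftGraph (n : ℕ) : SimpleGraph (Fin 4 × ZMod n) :=
  SimpleGraph.fromRel (fun a b =>
    (a.1 = 0 ∧ b.1 = 0 ∧ b.2 = a.2 + 1) ∨
    (a.1 = 3 ∧ b.1 = 3 ∧ b.2 = a.2 + 1) ∨
    (a.1 = 1 ∧ b.1 = 2) ∨
    (a.1 = 0 ∧ b.1 = 1 ∧ a.2 = b.2) ∨
    (a.1 = 2 ∧ b.1 = 3 ∧ a.2 = b.2))

variable {n : ℕ}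

def fv (n : ℕ) (x : ZMod n) : ℕ := if x.val ≤ 1 then x.val else n - x.val

def cycArc (n : ℕ) (x y : ZMod n) : Prop :=
  (y = x + 1 ∨ x = y + 1) ∧ fv n x < fv n y

lemma val_succ (hn : 1 < n) (x : ZMod n) :
    (x + 1 : ZMod n).val = x.val + 1 ∨ (x.val = n - 1 ∧ (x + 1 : ZMod n).val = 0) := by
  haveI : NeZero n := ⟨by omega⟩
  haveI : Fact (1 < n) := ⟨hn⟩
  have h1 : (x + 1 : ZMod n).val = (x.val + 1) % n := by
    rw [ZMod.val_add, ZMod.val_one]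
  have hx : x.val < n := ZMod.val_lt x
  rcases Nat.lt_or_ge (x.val + 1) n with h | h
  · left; rw [h1, Nat.mod_eq_of_lt h]
  · right
    have hx1 : x.val = n - 1 := by omega
    constructor
    · exact hx1
    · rw [h1, hx1, Nat.sub_add_cancel (by omega), Nat.mod_self]

/-- the exact arc structure of the cycle orientation, in terms of `val`. -/
lemma cycArc_val (hn : 3 < n) {x y : ZMod n} (h : cycArc n x y) :
    (x.val = 0 ∧ y.val = 1) ∨ (x.val = 1 ∧ y.val = 2) ∨
    (x.val = 0 ∧ y.val = n - 1) ∨ (3 ≤ x.val ∧ y.val + 1 = x.val) := by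
  haveI : NeZero n := ⟨by omega⟩
  obtain ⟨hadj, hf⟩ := h
  have hx : x.val < n := ZMod.val_lt x
  have hy : y.val < n := ZMod.val_lt y
  simp only [fv] at hf
  rcases hadj with rfl | rfl
  · rcases val_succ (by omega) x with h1 | ⟨h1, h2⟩ <;> split_ifs at hf <;> omega
  · rcases val_succ (by omega) y with h1 | ⟨h1, h2⟩ <;> split_ifs at hf <;> omega

lemma fv_succ_ne (hn : 3 < n) (x : ZMod n) : fv n x ≠ fv n (x + 1) := by
  haveI : NeZero n := ⟨by omega⟩
  have hx : x.val < n := ZMod.val_lt x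
  have hy : (x + 1 : ZMod n).val < n := ZMod.val_lt _
  simp only [fv]
  rcases val_succ (by omega) x with h1 | ⟨h1, h2⟩ <;> split_ifs <;> omega

lemma cycArc_ne {x y : ZMod n} (h : cycArc n x y) : x ≠ y :=
  fun he => absurd (he ▸ h.2) (lt_irrefl _)

lemma fv_lt (hn : 3 < n) (x : ZMod n) : fv n x < n := by
  haveI : NeZero n := ⟨by omega⟩
  have hx : x.val < n := ZMod.val_lt x
  simp only [fv]; split_ifs <;> omega

/-- reachability in ≥ 1 steps in the cycle (overapproximation). -/
def R1 (n : ℕ) (x y : ZMod n) : Prop :=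
  (x.val = 0 ∧ 1 ≤ y.val) ∨ (x.val = 1 ∧ y.val = 2) ∨ (2 ≤ y.val ∧ y.val < x.val)

/-- reachability in ≥ 2 steps in the cycle (overapproximation). -/
def R2 (n : ℕ) (x y : ZMod n) : Prop :=
  (x.val = 0 ∧ 2 ≤ y.val ∧ y.val ≤ n - 2) ∨ (2 ≤ y.val ∧ y.val + 2 ≤ x.val)

lemma R1_of_arc (hn : 3 < n) {x y : ZMod n} (h : cycArc n x y) : R1 n x y := by
  have := cycArc_val hn h
  haveI : NeZero n := ⟨by omega⟩
  have hx : x.val < n := ZMod.val_lt x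
  have hy : y.val < n := ZMod.val_lt y
  unfold R1; omega

lemma R1_trans_arc (hn : 3 < n) {x y z : ZMod n} (h1 : R1 n x y) (h2 : cycArc n y z) :
    R1 n x z := by
  have := cycArc_val hn h2
  haveI : NeZero n := ⟨by omega⟩
  have hx : x.val < n := ZMod.val_lt x
  have hy : y.val < n := ZMod.val_lt y
  unfold R1 at h1 ⊢; omega

lemma R2_of_two (hn : 3 < n) {x y z : ZMod n} (h1 : cycArc n x y) (h2 : cycArc n y z) :
    R2 n x z := by
  have a1 := cycArc_val hn h1
  have a2 := cycArc_val hn h2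
  haveI : NeZero n := ⟨by omega⟩
  have hx : x.val < n := ZMod.val_lt x
  have hy : y.val < n := ZMod.val_lt y
  have hz : z.val < n := ZMod.val_lt z
  unfold R2; omega

lemma R2_trans_arc (hn : 3 < n) {x z w : ZMod n} (h1 : R2 n x z) (h2 : cycArc n z w) :
    R2 n x w := by
  have := cycArc_val hn h2
  haveI : NeZero n := ⟨by omega⟩
  have hx : x.val < n := ZMod.val_lt x
  have hz : z.val < n := ZMod.val_lt z
  unfold R2 at h1 ⊢; omega

lemma R1_ne {x y : ZMod n} (h : R1 n x y) : x ≠ y := by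
  intro he; subst he; unfold R1 at h; omega

lemma R2_ne {x y : ZMod n} (h : R2 n x y) : x ≠ y := by
  intro he; subst he; unfold R2 at h; omega

lemma R2_not_adj (hn : 3 < n) {x y : ZMod n} (h : R2 n x y) :
    ¬ (y = x + 1 ∨ x = y + 1) := by
  haveI : NeZero n := ⟨by omega⟩
  have hx : x.val < n := ZMod.val_lt x
  have hy : y.val < n := ZMod.val_lt y
  unfold R2 at h
  rintro (rfl | rfl)
  · rcases val_succ (by omega) x with h1 | ⟨h1, h2⟩ <;> omega
  · rcases val_succ (by omega) y with h1 | ⟨h1, h2⟩ <;> omega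

def toftD (n : ℕ) (a b : Fin 4 × ZMod n) : Prop :=
  (a.1 = 0 ∧ b.1 = 0 ∧ cycArc n a.2 b.2) ∨
  (a.1 = 3 ∧ b.1 = 3 ∧ cycArc n a.2 b.2) ∨
  (a.1 = 1 ∧ b.1 = 2) ∨
  (a.1 = 0 ∧ b.1 = 1 ∧ a.2 = b.2) ∨
  (a.1 = 2 ∧ b.1 = 3 ∧ a.2 = b.2)

def phi (n : ℕ) (a : Fin 4 × ZMod n) : ℕ :=
  if a.1 = 0 then fv n a.2 else if a.1 = 1 then n else if a.1 = 2 then n + 1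
  else n + 2 + fv n a.2

lemma phi_lt (hn : 3 < n) {a b : Fin 4 × ZMod n} (h : toftD n a b) : phi n a < phi n b := by
  obtain ⟨i, x⟩ := a
  obtain ⟨j, y⟩ := b
  have h1 := fv_lt hn x
  have h2 := fv_lt hn y
  rcases h with ⟨hi, hj, hc⟩ | ⟨hi, hj, hc⟩ | ⟨hi, hj⟩ | ⟨hi, hj, hc⟩ | ⟨hi, hj, hc⟩ <;>
      simp only at hi hj <;> subst hi <;> subst hj <;> simp [phi] <;> simp only at hc <;>
      first | exact hc.2 | (have := hc.2; omega) | omega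

/-- overapproximation of reachability in ≥ 2 steps in the Toft digraph. -/
def P2 (n : ℕ) (a b : Fin 4 × ZMod n) : Prop :=
  (a.1 = 0 ∧ b.1 = 0 ∧ R2 n a.2 b.2) ∨
  (a.1 = 3 ∧ b.1 = 3 ∧ R2 n a.2 b.2) ∨
  (a.1 = 0 ∧ b.1 = 1 ∧ a.2 ≠ b.2) ∨
  (a.1 = 2 ∧ b.1 = 3 ∧ R1 n a.2 b.2) ∨
  (a.1 = 0 ∧ b.1 = 2) ∨ (a.1 = 0 ∧ b.1 = 3) ∨ (a.1 = 1 ∧ b.1 = 3)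

lemma P2_base (hn : 3 < n) {a b c : Fin 4 × ZMod n} (h1 : toftD n a b) (h2 : toftD n b c) :
    P2 n a c := by
  obtain ⟨i, x⟩ := a; obtain ⟨j, y⟩ := b; obtain ⟨l, z⟩ := c
  unfold toftD at h1 h2
  unfold P2
  simp only at h1 h2 ⊢
  rcases h1 with ⟨hi, hj, hc⟩ | ⟨hi, hj, hc⟩ | ⟨hi, hj⟩ | ⟨hi, hj, hc⟩ | ⟨hi, hj, hc⟩ <;>
    rcases h2 with ⟨hj', hl, hc'⟩ | ⟨hj', hl, hc'⟩ | ⟨hj', hl⟩ | ⟨hj', hl, hc'⟩ | ⟨hj', hl, hc'⟩ <;>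
    subst hi <;> subst hl <;> first
      | (exfalso; rw [hj] at hj'; exact absurd hj' (by decide))
      | simp_all
  · exact R2_of_two hn hc hc'
  · exact cycArc_ne hc
  · exact R2_of_two hn hc hc'
  · exact R1_of_arc hn hc'

lemma P2_step (hn : 3 < n) {a c d : Fin 4 × ZMod n} (h1 : P2 n a c) (h2 : toftD n c d) :
    P2 n a d := by
  obtain ⟨i, x⟩ := a; obtain ⟨j, y⟩ := c; obtain ⟨l, z⟩ := d
  unfold toftD at h2
  unfold P2 at h1 ⊢
  simp only at h1 h2 ⊢
  rcases h1 with ⟨hi, hj, hc⟩ | ⟨hi, hj, hc⟩ | ⟨hi, hj, hc⟩ | ⟨hi, hj, hc⟩ | ⟨hi, hj⟩ |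
      ⟨hi, hj⟩ | ⟨hi, hj⟩ <;>
    rcases h2 with ⟨hj', hl, hc'⟩ | ⟨hj', hl, hc'⟩ | ⟨hj', hl⟩ | ⟨hj', hl, hc'⟩ | ⟨hj', hl, hc'⟩ <;>
    subst hi <;> subst hl <;> first
      | (exfalso; rw [hj] at hj'; exact absurd hj' (by decide))
      | simp_all
  · exact R2_trans_arc hn hc hc'
  · exact R2_ne hc
  · exact R2_trans_arc hn hc hc'
  · exact R1_trans_arc hn hc hc'

lemma P2_noAdj (hn : 3 < n) {a d : Fin 4 × ZMod n} (h : P2 n a d) :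
    ¬ (toftGraph n).Adj a d := by
  obtain ⟨i, x⟩ := a; obtain ⟨l, z⟩ := d
  rw [toftGraph, SimpleGraph.fromRel_adj]
  rintro ⟨-, hrel⟩
  unfold P2 at h
  simp only at h hrel
  rcases h with ⟨hi, hl, hc⟩ | ⟨hi, hl, hc⟩ | ⟨hi, hl, hc⟩ | ⟨hi, hl, hc⟩ | ⟨hi, hl⟩ |
      ⟨hi, hl⟩ | ⟨hi, hl⟩ <;> subst hi <;> subst hl <;>
    rcases hrel with (⟨h1, h2, h3⟩ | ⟨h1, h2, h3⟩ | ⟨h1, h2⟩ | ⟨h1, h2, h3⟩ | ⟨h1, h2, h3⟩) |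
      (⟨h1, h2, h3⟩ | ⟨h1, h2, h3⟩ | ⟨h1, h2⟩ | ⟨h1, h2, h3⟩ | ⟨h1, h2, h3⟩) <;>
    first
      | exact absurd h1 (by decide)
      | exact absurd h2 (by decide)
      | exact R2_not_adj hn hc (Or.inl h3)
      | exact R2_not_adj hn hc (Or.inr h3)
      | exact hc h3
      | exact hc h3.symm
      | exact R1_ne hc h3
      | exact R1_ne hc h3.symm

lemma toftD_orientation (hn : 3 < n) : (toftGraph n).IsOrientation (toftD n) := by
  constructor
  · rintro ⟨i, x⟩ ⟨j, y⟩
    rw [toftGraph, SimpleGraph.fromRel_adj]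
    constructor
    · rintro ⟨hne, hrel⟩
      unfold toftD
      simp only at hrel ⊢
      rcases hrel with (⟨h1, h2, h3⟩ | ⟨h1, h2, h3⟩ | ⟨h1, h2⟩ | ⟨h1, h2, h3⟩ | ⟨h1, h2, h3⟩) |
        (⟨h1, h2, h3⟩ | ⟨h1, h2, h3⟩ | ⟨h1, h2⟩ | ⟨h1, h2, h3⟩ | ⟨h1, h2, h3⟩)
      · have hne' := fv_succ_ne hn x
        rw [← h3] at hne'
        rcases lt_or_gt_of_ne hne' with hlt | hgt
        · exact Or.inl (Or.inl ⟨h1, h2, Or.inl h3, hlt⟩)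
        · exact Or.inr (Or.inl ⟨h2, h1, Or.inr h3, hgt⟩)
      · have hne' := fv_succ_ne hn x
        rw [← h3] at hne'
        rcases lt_or_gt_of_ne hne' with hlt | hgt
        · exact Or.inl (Or.inr (Or.inl ⟨h1, h2, Or.inl h3, hlt⟩))
        · exact Or.inr (Or.inr (Or.inl ⟨h2, h1, Or.inr h3, hgt⟩))
      · exact Or.inl (Or.inr (Or.inr (Or.inl ⟨h1, h2⟩)))
      · exact Or.inl (Or.inr (Or.inr (Or.inr (Or.inl ⟨h1, h2, h3⟩))))
      · exact Or.inl (Or.inr (Or.inr (Or.inr (Or.inr ⟨h1, h2, h3⟩))))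
      · have hne' := fv_succ_ne hn y
        rw [← h3] at hne'
        rcases lt_or_gt_of_ne hne' with hlt | hgt
        · exact Or.inr (Or.inl ⟨h1, h2, Or.inl h3, hlt⟩)
        · exact Or.inl (Or.inl ⟨h2, h1, Or.inr h3, hgt⟩)
      · have hne' := fv_succ_ne hn y
        rw [← h3] at hne'
        rcases lt_or_gt_of_ne hne' with hlt | hgt
        · exact Or.inr (Or.inr (Or.inl ⟨h1, h2, Or.inl h3, hlt⟩))
        · exact Or.inl (Or.inr (Or.inl ⟨h2, h1, Or.inr h3, hgt⟩))
      · exact Or.inr (Or.inr (Or.inr (Or.inl ⟨h1, h2⟩)))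
      · exact Or.inr (Or.inr (Or.inr (Or.inr (Or.inl ⟨h1, h2, h3⟩))))
      · exact Or.inr (Or.inr (Or.inr (Or.inr (Or.inr ⟨h1, h2, h3⟩))))
    · intro h
      have key : ∀ a b : Fin 4 × ZMod n, toftD n a b →
          a ≠ b ∧ ((a.1 = 0 ∧ b.1 = 0 ∧ b.2 = a.2 + 1) ∨
            (a.1 = 3 ∧ b.1 = 3 ∧ b.2 = a.2 + 1) ∨
            (a.1 = 1 ∧ b.1 = 2) ∨
            (a.1 = 0 ∧ b.1 = 1 ∧ a.2 = b.2) ∨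
            (a.1 = 2 ∧ b.1 = 3 ∧ a.2 = b.2) ∨
            (b.1 = 0 ∧ a.1 = 0 ∧ a.2 = b.2 + 1) ∨
            (b.1 = 3 ∧ a.1 = 3 ∧ a.2 = b.2 + 1)) := by
        rintro ⟨i', x'⟩ ⟨j', y'⟩ hd
        unfold toftD at hd
        simp only at hd ⊢
        rcases hd with ⟨h1, h2, ⟨hadj, hlt⟩⟩ | ⟨h1, h2, ⟨hadj, hlt⟩⟩ | ⟨h1, h2⟩ |
            ⟨h1, h2, h3⟩ | ⟨h1, h2, h3⟩
        · refine ⟨?_, ?_⟩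
          · intro he
            exact cycArc_ne (⟨hadj, hlt⟩ : cycArc n x' y') (congrArg Prod.snd he)
          · rcases hadj with h3 | h3
            · exact Or.inl ⟨h1, h2, h3⟩
            · exact Or.inr (Or.inr (Or.inr (Or.inr (Or.inr (Or.inl ⟨h2, h1, h3⟩)))))
        · refine ⟨?_, ?_⟩
          · intro he
            exact cycArc_ne (⟨hadj, hlt⟩ : cycArc n x' y') (congrArg Prod.snd he)
          · rcases hadj with h3 | h3
            · exact Or.inr (Or.inl ⟨h1, h2, h3⟩)
            · exact Or.inr (Or.inr (Or.inr (Or.inr (Or.inr (Or.inr ⟨h2, h1, h3⟩)))))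
        · refine ⟨fun he => ?_, Or.inr (Or.inr (Or.inl ⟨h1, h2⟩))⟩
          have : i' = j' := congrArg Prod.fst he
          rw [h1, h2] at this
          exact absurd this (by decide)
        · refine ⟨fun he => ?_, Or.inr (Or.inr (Or.inr (Or.inl ⟨h1, h2, h3⟩)))⟩
          have : i' = j' := congrArg Prod.fst he
          rw [h1, h2] at this
          exact absurd this (by decide)
        · refine ⟨fun he => ?_, Or.inr (Or.inr (Or.inr (Or.inr (Or.inl ⟨h1, h2, h3⟩))))⟩
          have : i' = j' := congrArg Prod.fst he
          rw [h1, h2] at this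
          exact absurd this (by decide)
      rcases h with h | h
      · obtain ⟨hne, hr⟩ := key _ _ h
        refine ⟨hne, ?_⟩
        simp only at hr ⊢
        rcases hr with h' | h' | h' | h' | h' | h' | h'
        · exact Or.inl (Or.inl h')
        · exact Or.inl (Or.inr (Or.inl h'))
        · exact Or.inl (Or.inr (Or.inr (Or.inl h')))
        · exact Or.inl (Or.inr (Or.inr (Or.inr (Or.inl h'))))
        · exact Or.inl (Or.inr (Or.inr (Or.inr (Or.inr h'))))
        · exact Or.inr (Or.inl h')
        · exact Or.inr (Or.inr (Or.inl h'))
      · obtain ⟨hne, hr⟩ := key _ _ h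
        refine ⟨Ne.symm hne, ?_⟩
        simp only at hr ⊢
        rcases hr with h' | h' | h' | h' | h' | h' | h'
        · exact Or.inr (Or.inl h')
        · exact Or.inr (Or.inr (Or.inl h'))
        · exact Or.inr (Or.inr (Or.inr (Or.inl h')))
        · exact Or.inr (Or.inr (Or.inr (Or.inr (Or.inl h'))))
        · exact Or.inr (Or.inr (Or.inr (Or.inr (Or.inr h'))))
        · exact Or.inl (Or.inl h')
        · exact Or.inl (Or.inr (Or.inl h'))
  · intro u v h h'
    have := phi_lt hn h
    have := phi_lt hn h'
    omega

lemma toftD_acyclic (hn : 3 < n) : DigraphAcyclic (toftD n) := by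
  intro v hv
  have key : ∀ a b : Fin 4 × ZMod n, Relation.TransGen (toftD n) a b → phi n a < phi n b := by
    intro a b h
    induction h with
    | single h => exact phi_lt hn h
    | tail _ h2 ih => exact ih.trans (phi_lt hn h2)
  exact absurd (key v v hv) (lt_irrefl _)

lemma chainP2 (hn : 3 < n) :
    ∀ k, 2 ≤ k → ∀ q : ℕ → Fin 4 × ZMod n,
      (∀ i, i < k → toftD n (q i) (q (i + 1))) → P2 n (q 0) (q k) := by
  intro k
  induction k with
  | zero => omega
  | succ m ih =>
    intro hk q hq
    rcases Nat.lt_or_ge m 2 with hm | hm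
    · have hm2 : m = 1 := by omega
      subst hm2
      exact P2_base hn (hq 0 (by omega)) (hq 1 (by omega))
    · exact P2_step hn (ih (by omega) q fun i hi => hq i (by omega)) (hq m (by omega))


/-- For every odd integer `n > 3`, Toft's graph `T n` is semi-transitive. -/
theorem toftGraph_semitransitive (n : ℕ) (hodd : Odd n) (hn : 3 < n) :
    (toftGraph n).Semitransitive := by
  refine ⟨toftD n, toftD_orientation hn, toftD_acyclic hn, ?_⟩
  intro k p hp
  match k, p, hp with
  | 0, p, hp =>
    left
    have e : Fin.last 0 = (0 : Fin 1) := by decide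
    rw [e]
    exact (toftGraph n).irrefl
  | 1, p, hp =>
    right
    intro i j hij
    have hi : i.val < j.val := hij
    have hi2 : i.val < 2 := i.isLt
    have hj2 : j.val < 2 := j.isLt
    have ei : i = 0 := Fin.ext (by simp only [Fin.val_zero]; omega)
    have ej : j = 1 := Fin.ext (by simp only [Fin.val_one]; omega)
    subst ei; subst ej
    have := hp 0
    have e1 : (0 : Fin 1).castSucc = (0 : Fin 2) := by decide
    have e2 : (0 : Fin 1).succ = (1 : Fin 2) := by decide
    rwa [e1, e2] at this
  | (m + 2), p, hp =>
    left
    apply P2_noAdj hn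
    have hle : ∀ i : ℕ, min i (m + 2) < m + 3 := by omega
    set q : ℕ → Fin 4 × ZMod n := fun i => p ⟨min i (m + 2), hle i⟩ with hqdef
    have hq' : ∀ i, i < m + 2 → toftD n (q i) (q (i + 1)) := by
      intro i hi
      have h := hp ⟨i, hi⟩
      have e1 : (⟨min i (m + 2), hle i⟩ : Fin (m + 3)) = (⟨i, hi⟩ : Fin (m + 2)).castSucc :=
        Fin.ext (by simp; omega)
      have e2 : (⟨min (i + 1) (m + 2), hle (i + 1)⟩ : Fin (m + 3)) =
          (⟨i, hi⟩ : Fin (m + 2)).succ := Fin.ext (by simp; omega)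
      show toftD n (p ⟨min i (m + 2), hle i⟩) (p ⟨min (i + 1) (m + 2), hle (i + 1)⟩)
      rw [e1, e2]
      exact h
    have hP := chainP2 hn (m + 2) (by omega) q hq'
    have e0 : q 0 = p 0 := by
      show p ⟨min 0 (m + 2), hle 0⟩ = p 0
      congr 1
    have e3 : q (m + 2) = p (Fin.last (m + 2)) := by
      show p ⟨min (m + 2) (m + 2), hle _⟩ = p (Fin.last (m + 2))
      congr 1
      exact Fin.ext (by simp)
    rwa [e0, e3] at hP
end

section
/- Let D be a finite acyclic digraph and let v be a vertex of D that is a source or a sink. If every neighbor of v is a sink in the digraph D − v obtained by deleting v, or every neighbor of v is a source in D − v, then v does not lie in any shortcut of D. -/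
/-- `s` is (the vertex set of) a shortcut in the digraph `D`: `s = {p 0, p 1, …, p k}` for some
directed path `p 0 → p 1 → ⋯ → p k` with `k ≥ 3` such that `p 0 → p k` is an arc (the
shortcutting arc) and some pair `p i, p j` with `i < j` is joined by no arc in either
direction. -/
def IsShortcut {V : Type*} (D : V → V → Prop) (s : Set V) : Prop :=
  ∃ (k : ℕ) (p : Fin (k + 1) → V), 3 ≤ k ∧ s = Set.range p ∧
    (∀ i : Fin k, D (p i.castSucc) (p i.succ)) ∧
    D (p 0) (p (Fin.last k)) ∧
    ∃ i j : Fin (k + 1), i < j ∧ ¬ D (p i) (p j) ∧ ¬ D (p j) (p i)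


/-!
If `v` is a source, it can only be the first vertex `p 0` of the path underlying a shortcut.
Then `p 1` is a neighbour of `v` with the arc `p 1 → p 2`, and the far end `p k` is a neighbour
(via the shortcutting arc) with the arc `p (k - 1) → p k`. Since `k ≥ 3` and the path is
injective by acyclicity, neither `p 2` nor `p (k - 1)` is `v`, so the neighbours of `v` are
neither all sinks nor all sources in `D - v`. The sink case is the source case in the reversed
digraph.
-/

def IsDirectedPath {V : Type*} (D : V → V → Prop) {k : ℕ} (p : Fin (k + 1) → V) : Prop :=
  ∀ i : Fin k, D (p i.castSucc) (p i.succ)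

lemma DigraphAcyclic.flip {V : Type*} {D : V → V → Prop} (hD : DigraphAcyclic D) :
    DigraphAcyclic (flip D) :=
  fun v h => hD v (Relation.TransGen.swap v v h)

namespace IsDirectedPath

variable {V : Type*} {D : V → V → Prop} {k : ℕ} {p : Fin (k + 1) → V}

lemma transGen (hp : IsDirectedPath D p) {i j : Fin (k + 1)} (hij : i < j) :
    Relation.TransGen D (p i) (p j) := by
  induction j using Fin.induction with
  | zero => exact absurd hij (Fin.not_lt_zero i)
  | succ t ih =>
    rcases (Fin.le_castSucc_iff.mpr hij).lt_or_eq with hit | rfl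
    · exact (ih hit).tail (hp t)
    · exact .single (hp t)

lemma injective (hp : IsDirectedPath D p) (hD : DigraphAcyclic D) : Function.Injective p := by
  intro i j hpij
  by_contra hne
  rcases lt_or_gt_of_ne hne with hij | hij <;>
    exact hD (p j) (by simpa only [hpij] using hp.transGen hij)

lemma reverse (hp : IsDirectedPath D p) : IsDirectedPath (flip D) (p ∘ Fin.rev) := by
  intro i
  simpa [flip, Fin.rev_castSucc, Fin.rev_succ] using hp i.rev

lemma eq_zero_of_source (hp : IsDirectedPath D p) {m : Fin (k + 1)} (hm : ∀ u, ¬ D u (p m)) :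
    m = 0 := by
  induction m using Fin.cases with
  | zero => rfl
  | succ t => exact absurd (hp t) (hm _)

end IsDirectedPath

lemma notMem_range_of_source {V : Type*} {D : V → V → Prop} (hD : DigraphAcyclic D) {v : V}
    (hv : ∀ u, ¬ D u v)
    (hnbr : (∀ u, (D u v ∨ D v u) → ∀ w, w ≠ v → ¬ D u w) ∨
            (∀ u, (D u v ∨ D v u) → ∀ w, w ≠ v → ¬ D w u))
    {k : ℕ} (hk : 3 ≤ k) {p : Fin (k + 1) → V} (hp : IsDirectedPath D p)
    (hlast : D (p 0) (p (Fin.last k))) :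
    v ∉ Set.range p := by
  rintro ⟨m, rfl⟩
  obtain rfl := hp.eq_zero_of_source hv
  obtain ⟨n, rfl⟩ := Nat.exists_eq_add_of_le' hk
  have hinj := hp.injective hD
  rcases hnbr with hsink | hsource
  · exact hsink (p 1) (.inr (by simpa using hp 0)) (p (Fin.succ 1)) (hinj.ne (Fin.succ_ne_zero 1))
      (by simpa only [Fin.castSucc_one] using hp 1)
  · refine hsource (p (Fin.last _)) (.inr hlast) (p (Fin.last (n + 2)).castSucc) ?_
      (by simpa using hp (Fin.last (n + 2)))
    exact hinj.ne (by simp [Fin.ext_iff])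

theorem source_or_sink_not_in_shortcut_general {V : Type*} (D : V → V → Prop)
    (hacyc : DigraphAcyclic D) (v : V)
    (hv : (∀ u, ¬ D u v) ∨ (∀ u, ¬ D v u))
    (hnbr : (∀ u, (D u v ∨ D v u) → ∀ w, w ≠ v → ¬ D u w) ∨
            (∀ u, (D u v ∨ D v u) → ∀ w, w ≠ v → ¬ D w u)) :
    ¬ ∃ s : Set V, IsShortcut D s ∧ v ∈ s := by
  rintro ⟨s, ⟨k, p, hk, rfl, hp, hlast, -⟩, hvp⟩
  rcases hv with hsource | hsink
  · exact notMem_range_of_source hacyc hsource hnbr hk hp hlast hvp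
  · refine notMem_range_of_source hacyc.flip hsink
      (hnbr.symm.imp (fun h u hu => h u hu.symm) (fun h u hu => h u hu.symm)) hk
      (IsDirectedPath.reverse hp) (by simpa [flip] using hlast) ?_
    rwa [Fin.rev_surjective.range_comp]

/-- Claim 1 of the paper: in a finite acyclic digraph `D`, if `v` is a source or a sink, and
either all neighbours of `v` are sinks in `D - v` or all of them are sources in `D - v`, then
`v` does not lie in any shortcut of `D`. -/
theorem source_or_sink_not_in_shortcut {V : Type*} [Fintype V] (D : V → V → Prop)
    (hacyc : DigraphAcyclic D) (v : V)
    (hv : (∀ u, ¬ D u v) ∨ (∀ u, ¬ D v u))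
    (hnbr : (∀ u, (D u v ∨ D v u) → ∀ w, w ≠ v → ¬ D u w) ∨
            (∀ u, (D u v ∨ D v u) → ∀ w, w ≠ v → ¬ D w u)) :
    ¬ ∃ s : Set V, IsShortcut D s ∧ v ∈ s :=
  source_or_sink_not_in_shortcut_general D hacyc v hv hnbr
end

section
/- Every finite simple graph whose girth is strictly larger than its chromatic number admits a semi-transitive orientation, i.e., is semi-transitive. -/
/-! Orient every edge of a proper colouring towards its endpoint of larger colour. Colours
strictly increase along a directed path, so such a path has at most `χ(G)` vertices. If its
endpoints are adjacent and it has at least three vertices, closing it up gives a cycle of length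
at most `χ(G) < girth G`, which is impossible; so a directed path with adjacent endpoints is a
single arc. -/

namespace SimpleGraph

variable {V : Type*} {G : SimpleGraph V}

lemma Walk.IsPath.isCycle_cons {u v : V} {p : G.Walk u v} (hp : p.IsPath) (h : G.Adj v u)
    (hlen : 2 ≤ p.length) : (Walk.cons h p).IsCycle :=
  isCycle_iff_isPath_tail_and_le_length.mpr ⟨by simpa using hp, by simp; omega⟩

lemma egirth_le_of_injective_of_adj {k : ℕ} {p : Fin (k + 1) → V} (hp : Function.Injective p)
    (hadj : ∀ i : Fin k, G.Adj (p i.castSucc) (p i.succ)) (hk : 2 ≤ k)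
    (hclose : G.Adj (p (Fin.last k)) (p 0)) : G.egirth ≤ k + 1 := by
  have hne : List.ofFn p ≠ [] := by simp
  have hchain : (List.ofFn p).IsChain G.Adj :=
    List.isChain_ofFn.mpr fun i hi => hadj ⟨i, by omega⟩
  set w := Walk.ofSupport (List.ofFn p) hne hchain
  have hw : w.IsPath := .mk' (by simpa [w] using List.nodup_ofFn.mpr hp)
  have hclose' : G.Adj ((List.ofFn p).getLast hne) ((List.ofFn p).head hne) := by
    rw [List.head_ofFn, List.getLast_ofFn]; exact hclose
  have hlen : w.length = k := by simp [w]
  simpa [hlen] using egirth_le_length (hw.isCycle_cons hclose' (hlen.symm ▸ hk))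

namespace Coloring

variable {α : Type*} [LinearOrder α] (C : G.Coloring α)

def orientation (u v : V) : Prop :=
  G.Adj u v ∧ C u < C v

lemma isOrientation_orientation : G.IsOrientation C.orientation := by
  refine ⟨fun u v => ⟨fun huv => ?_, ?_⟩, fun u v huv hvu => huv.2.not_gt hvu.2⟩
  · exact (C.valid huv).lt_or_gt.imp (⟨huv, ·⟩) (⟨huv.symm, ·⟩)
  · rintro (huv | hvu)
    exacts [huv.1, hvu.1.symm]

lemma lt_of_transGen_orientation {u v : V} (huv : Relation.TransGen C.orientation u v) :
    C u < C v := by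
  induction huv with
  | single huv => exact huv.2
  | tail _ hbc ih => exact ih.trans hbc.2

lemma digraphAcyclic_orientation : DigraphAcyclic C.orientation :=
  fun _ hv => (C.lt_of_transGen_orientation hv).false

lemma strictMono_comp_of_orientation {k : ℕ} {p : Fin (k + 1) → V}
    (hp : ∀ i : Fin k, C.orientation (p i.castSucc) (p i.succ)) : StrictMono (C ∘ p) :=
  Fin.strictMono_iff_lt_succ.mpr fun i => (hp i).2

theorem isSemitransitiveOrientation_orientation [Fintype α]
    (hα : (Fintype.card α : ℕ∞) < G.egirth) : G.IsSemitransitiveOrientation C.orientation := by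
  refine ⟨C.isOrientation_orientation, C.digraphAcyclic_orientation, fun k p hp => ?_⟩
  rw [or_iff_not_imp_left, not_not]
  intro hadj
  obtain _ | _ | k := k
  · simp at hadj
  · intro i j hij
    obtain ⟨rfl, rfl⟩ : i = 0 ∧ j = 1 := by
      simp only [Fin.ext_iff, Fin.lt_def, Fin.val_zero, Fin.val_one] at hij ⊢; omega
    exact hp 0
  · have hinj : Function.Injective (C ∘ p) := (C.strictMono_comp_of_orientation hp).injective
    have hcard := Fintype.card_le_of_injective _ hinj
    rw [Fintype.card_fin] at hcard
    have hgirth := egirth_le_of_injective_of_adj hinj.of_comp (fun i => (hp i).1) (by omega)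
      hadj.symm
    exact absurd (hgirth.trans (by exact_mod_cast hcard)) hα.not_ge

end Coloring

end SimpleGraph

theorem girth_gt_chromaticNumber_semitransitive_general (V : Type) (G : SimpleGraph V)
    (h : G.chromaticNumber < G.egirth) : G.Semitransitive := by
  obtain ⟨n, hn⟩ := G.chromaticNumber_ne_top_iff_exists.mp h.ne_top
  obtain ⟨C⟩ := G.colorable_chromaticNumber hn
  refine ⟨C.orientation, C.isSemitransitiveOrientation_orientation ?_⟩
  rwa [Fintype.card_fin, ENat.natCast_toNat h.ne_top]

/-- Every finite graph whose girth is strictly larger than its chromatic number is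
semi-transitive. -/
theorem girth_gt_chromaticNumber_semitransitive (V : Type) [Fintype V] (G : SimpleGraph V)
    (h : G.chromaticNumber < G.egirth) : G.Semitransitive :=
  girth_gt_chromaticNumber_semitransitive_general V G h
end

section
/- A finite simple graph (with at least one vertex) has chromatic number k if and only if the minimum, taken over all acyclic orientations of the graph, of the length (number of arcs) of a longest directed path equals k − 1. -/
/-- The set of lengths (numbers of arcs) of directed paths in the digraph `D`. -/
def dipathLengths {V : Type*} (D : V → V → Prop) : Set ℕ :=
  {k | ∃ p : Fin (k + 1) → V, Function.Injective p ∧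
      ∀ i : Fin k, D (p i.castSucc) (p i.succ)}

section Aux

variable {V : Type*} {D : V → V → Prop}

lemma arcs_transGen' {k : ℕ} {p : Fin (k + 1) → V}
    (hp : ∀ i : Fin k, D (p i.castSucc) (p i.succ)) :
    ∀ (j : ℕ) (hj : j < k + 1) (i : ℕ) (hij : i < j),
      Relation.TransGen D (p ⟨i, lt_trans hij hj⟩) (p ⟨j, hj⟩) := by
  intro j
  induction j with
  | zero => intro hj i hij; omega
  | succ j ih =>
    intro hj i hij
    have harc : D (p ⟨j, by omega⟩) (p ⟨j + 1, hj⟩) := hp ⟨j, by omega⟩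
    rcases Nat.lt_or_ge i j with h | h
    · exact (ih (by omega) i h).tail harc
    · have : i = j := by omega
      subst this
      exact Relation.TransGen.single harc

lemma arcs_transGen {k : ℕ} {p : Fin (k + 1) → V}
    (hp : ∀ i : Fin k, D (p i.castSucc) (p i.succ)) {i j : Fin (k + 1)} (hij : i < j) :
    Relation.TransGen D (p i) (p j) := by
  have := arcs_transGen' hp j.1 j.2 i.1 hij
  simpa using this

lemma arcs_injective (hD : DigraphAcyclic D) {k : ℕ} {p : Fin (k + 1) → V}
    (hp : ∀ i : Fin k, D (p i.castSucc) (p i.succ)) : Function.Injective p := by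
  intro i j h
  by_contra hne
  rcases Ne.lt_or_gt hne with hlt | hlt
  · have := arcs_transGen hp hlt; rw [h] at this; exact hD _ this
  · have := arcs_transGen hp hlt; rw [← h] at this; exact hD _ this

/-- Lengths of directed walks ending at `v`. -/
def endSet (D : V → V → Prop) (v : V) : Set ℕ :=
  {k | ∃ p : Fin (k + 1) → V,
    (∀ i : Fin k, D (p i.castSucc) (p i.succ)) ∧ p (Fin.last k) = v}

lemma endSet_nonempty (v : V) : (endSet D v).Nonempty :=
  ⟨0, fun _ => v, fun i => i.elim0, rfl⟩

lemma endSet_bddAbove [Fintype V] (hD : DigraphAcyclic D) (v : V) :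
    BddAbove (endSet D v) := by
  refine ⟨Fintype.card V, fun k hk => ?_⟩
  obtain ⟨p, hp, -⟩ := hk
  have := Fintype.card_le_of_injective p (arcs_injective hD hp)
  simp only [Fintype.card_fin] at this
  omega

/-- Height: length of a longest directed walk ending at `v`. -/
noncomputable def dheight (D : V → V → Prop) (v : V) : ℕ := sSup (endSet D v)

lemma dheight_mem [Fintype V] (hD : DigraphAcyclic D) (v : V) :
    dheight D v ∈ endSet D v :=
  Nat.sSup_mem (endSet_nonempty v) (endSet_bddAbove hD v)

lemma dheight_lt [Fintype V] (hD : DigraphAcyclic D) {u v : V} (huv : D u v) :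
    dheight D u < dheight D v := by
  have key : ∀ m : ℕ, m ∈ endSet D u → m + 1 ∈ endSet D v := by
    rintro m ⟨p, hp, hlast⟩
    refine ⟨fun i => if hi : (i : ℕ) < m + 1 then p ⟨i, hi⟩ else v, fun i => ?_, ?_⟩
    · rcases Nat.lt_or_ge (i : ℕ) m with h | h
      · beta_reduce
        rw [dif_pos (show ((i.castSucc : Fin (m + 2)) : ℕ) < m + 1 by simp only [Fin.coe_castSucc, Fin.val_succ]; omega),
          dif_pos (show ((i.succ : Fin (m + 2)) : ℕ) < m + 1 by simp only [Fin.coe_castSucc, Fin.val_succ]; omega)]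
        exact hp ⟨(i : ℕ), h⟩
      · have hie : (i : ℕ) = m := by omega
        beta_reduce
        rw [dif_pos (show ((i.castSucc : Fin (m + 2)) : ℕ) < m + 1 by simp only [Fin.coe_castSucc, Fin.val_succ]; omega),
          dif_neg (show ¬ ((i.succ : Fin (m + 2)) : ℕ) < m + 1 by simp only [Fin.coe_castSucc, Fin.val_succ]; omega)]
        have hpe : p ⟨((i.castSucc : Fin (m + 2)) : ℕ), by simp only [Fin.coe_castSucc, Fin.val_succ]; omega⟩ = u := by
          rw [← hlast]
          congr 1
          simp [Fin.ext_iff, hie]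
        rw [hpe]
        exact huv
    · beta_reduce
      rw [dif_neg (by simp)]
  have hmem : dheight D u + 1 ∈ endSet D v := key _ (dheight_mem hD u)
  exact le_csSup (endSet_bddAbove hD v) hmem

lemma dheight_mem_dipathLengths [Fintype V] (hD : DigraphAcyclic D) (v : V) :
    dheight D v ∈ dipathLengths D := by
  obtain ⟨p, hp, -⟩ := dheight_mem hD v
  exact ⟨p, arcs_injective hD hp, hp⟩

theorem colorable_of_acyclic [Fintype V] (G : SimpleGraph V) (hor : G.IsOrientation D)
    (hD : DigraphAcyclic D) {L : ℕ} (hL : IsGreatest (dipathLengths D) L) :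
    G.Colorable (L + 1) := by
  refine ⟨SimpleGraph.Coloring.mk
    (fun v => ⟨dheight D v, Nat.lt_succ_of_le (hL.2 (dheight_mem_dipathLengths hD v))⟩) ?_⟩
  intro u v hadj
  simp only [Ne, Fin.mk.injEq]
  rcases (hor.1 u v).1 hadj with h | h
  · exact (dheight_lt hD h).ne
  · exact (dheight_lt hD h).ne'

theorem exists_acyclic_orientation [Fintype V] [Nonempty V] {G : SimpleGraph V} {n : ℕ}
    (hc : G.Colorable n) :
    ∃ L, (∃ D : V → V → Prop,
        G.IsOrientation D ∧ DigraphAcyclic D ∧ IsGreatest (dipathLengths D) L) ∧ L + 1 ≤ n := by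
  obtain ⟨c⟩ := hc
  set D : V → V → Prop := fun u v => G.Adj u v ∧ c u < c v with hDdef
  have hor : G.IsOrientation D := by
    constructor
    · intro u v
      constructor
      · intro h
        rcases Ne.lt_or_gt (c.valid h) with hlt | hlt
        · exact Or.inl ⟨h, hlt⟩
        · exact Or.inr ⟨h.symm, hlt⟩
      · rintro (⟨h, -⟩ | ⟨h, -⟩)
        exacts [h, h.symm]
    · rintro u v ⟨-, h1⟩ ⟨-, h2⟩
      exact absurd h1 (not_lt_of_gt h2)
  have htg : ∀ {u v}, Relation.TransGen D u v → c u < c v := by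
    intro u v h
    induction h with
    | single h => exact h.2
    | tail _ h ih => exact ih.trans h.2
  have hac : DigraphAcyclic D := fun v h => lt_irrefl _ (htg h)
  have hne : (dipathLengths D).Nonempty :=
    ⟨0, fun _ => Classical.arbitrary V, fun a b _ => by have := a.2; have := b.2; exact Fin.ext (by omega), fun i => i.elim0⟩
  have hbd : ∀ k ∈ dipathLengths D, k + 1 ≤ n := by
    rintro k ⟨p, -, hp⟩
    have hsm : StrictMono (fun i => c (p i)) := fun i j hij => htg (arcs_transGen hp hij)
    have := Fintype.card_le_of_injective _ hsm.injective
    simpa using this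
  have hbdd : BddAbove (dipathLengths D) := ⟨n, fun k hk => by have := hbd k hk; omega⟩
  refine ⟨sSup (dipathLengths D), ⟨D, hor, hac, Nat.sSup_mem hne hbdd,
    fun b hb => le_csSup hbdd hb⟩, hbd _ (Nat.sSup_mem hne hbdd)⟩

end Aux

/-- The Gallai–Roy–Vitaver theorem: a finite graph with at least one vertex has chromatic
number `k + 1` if and only if the minimum, over all acyclic orientations, of the length of a
longest directed path equals `k`. -/
theorem gallai_roy_vitaver (V : Type) [Fintype V] [Nonempty V] (G : SimpleGraph V) (k : ℕ) :
    G.chromaticNumber = (k + 1 : ℕ) ↔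
      sInf {L : ℕ | ∃ D : V → V → Prop,
        G.IsOrientation D ∧ DigraphAcyclic D ∧ IsGreatest (dipathLengths D) L} = k := by
  set n := (G.chromaticNumber).toNat with hn
  have hcol : G.Colorable n := G.colorable_chromaticNumber_of_fintype
  have hnetop : G.chromaticNumber ≠ ⊤ :=
    SimpleGraph.chromaticNumber_ne_top_iff_exists.2 ⟨_, G.colorable_of_fintype⟩
  have hχ : G.chromaticNumber = (n : ℕ∞) := (ENat.coe_toNat hnetop).symm
  have hpos : 1 ≤ n := by
    have := G.chromaticNumber_pos hcol
    rw [hχ] at this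
    exact_mod_cast this
  set S := {L : ℕ | ∃ D : V → V → Prop,
    G.IsOrientation D ∧ DigraphAcyclic D ∧ IsGreatest (dipathLengths D) L} with hS
  have hlb : ∀ L ∈ S, n ≤ L + 1 := by
    rintro L ⟨D, hor, hac, hL⟩
    have := (colorable_of_acyclic G hor hac hL).chromaticNumber_le
    rw [hχ] at this
    exact_mod_cast this
  obtain ⟨L₀, hL₀S, hL₀⟩ := exists_acyclic_orientation hcol
  have hinf : sInf S = n - 1 := by
    apply le_antisymm
    · have := Nat.sInf_le (show L₀ ∈ S from hL₀S)
      omega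
    · refine le_csInf ⟨L₀, hL₀S⟩ (fun L hL => ?_)
      have := hlb L hL
      omega
  rw [hχ, hinf]
  constructor
  · intro h
    have : n = k + 1 := by exact_mod_cast h
    omega
  · intro h
    have : n = k + 1 := by omega
    exact_mod_cast this
end
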